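/- Let ρ be a finite positive Borel measure on the unit circle 𝕋 and t > 1. For θ ∈ [−π,π], set G(r,θ) = ((r²−1)/log r)·∫_𝕋 dρ(ζ)/|ζ − re^{iθ}|² for 0 < r < 1. Then: (i) the set {r ∈ (0,1) : G(r,θ) < 1/(t−1)} is nonempty, and its supremum R_t(θ) satisfies 0 < R_t(θ) ≤ 1; (ii) R_t(θ) < 1 if and only if g(θ) > 1/(t−1), where g(θ) = 2∫_𝕋 dρ(ζ)/|ζ − e^{iθ}|² ∈ [0,∞]; (iii) if R_t(θ) < 1 then G(R_t(θ),θ) = 1/(t−1). -/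

import Mathlib

open MeasureTheory Filter ENNReal

/-- G(r,θ) = ((r²−1)/log r)·∫_𝕋 dρ(ζ)/|ζ − re^{iθ}|². -/
noncomputable def GT (ρ : Measure ℂ) (r θ : ℝ) : ℝ :=
  ((r ^ 2 - 1) / Real.log r) *
    ∫ ζ : ℂ, 1 / ‖ζ - (r : ℂ) * Complex.exp ((θ : ℂ) * Complex.I)‖ ^ 2 ∂ρ

/-- R_t(θ) = sup{r ∈ (0,1) : G(r,θ) < 1/(t−1)}. -/
noncomputable def RT (ρ : Measure ℂ) (t θ : ℝ) : ℝ :=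
  sSup {r : ℝ | r ∈ Set.Ioo (0 : ℝ) 1 ∧ GT ρ r θ < 1 / (t - 1)}

/-- g(θ) = 2∫_𝕋 dρ(ζ)/|ζ − e^{iθ}|², with values in [0,∞]. -/
noncomputable def gT (ρ : Measure ℂ) (θ : ℝ) : ℝ≥0∞ :=
  2 * ∫⁻ ζ : ℂ, (ENNReal.ofReal (‖ζ - Complex.exp ((θ : ℂ) * Complex.I)‖ ^ 2))⁻¹ ∂ρ


/-!
Write `G(r, θ) = A(r) · ∫ ‖ζ - r e^{iθ}‖⁻² dρ` with `A(r) = (r² - 1) / log r`. As `r → 0⁺`,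
`A(r) → 0` while the integral stays bounded, so the sublevel set is nonempty. The inequality
`-log r > 2(1 - r)/(1 + r)` gives `A(r) < (1 + r)² / 2`, which makes the integrand of `G(r, θ)`
strictly smaller than that of `g(θ)` on the circle: if `g(θ) ≤ 1/(t - 1)` then `G < 1/(t - 1)` on
all of `(0, 1)` and `R_t(θ) = 1`. Conversely `A(r) → 2` as `r → 1⁻`, so Fatou's lemma gives
`g(θ) ≤ liminf G(r, θ)`, and `g(θ) > 1/(t - 1)` keeps `G` above `1/(t - 1)` near `1`, whence
`R_t(θ) < 1`. Finally `G` is continuous on `(0, 1)`, so it equals `1/(t - 1)` at a supremum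
`R_t(θ) < 1` of its sublevel set.
-/

open Set Topology

noncomputable def radialFactor (r : ℝ) : ℝ := (r ^ 2 - 1) / Real.log r

lemma two_mul_one_sub_div_one_add_lt_neg_log {r : ℝ} (h0 : 0 < r) (h1 : r < 1) :
    2 * (1 - r) / (1 + r) < -Real.log r := by
  set y := (1 - r) / (1 + r) with hy
  have hy0 : 0 < y := div_pos (by linarith) (by linarith)
  have hy1 : |y| < 1 := by
    rw [abs_of_pos hy0, div_lt_one (by linarith)]
    linarith
  have hlog : Real.log (1 + y) - Real.log (1 - y) = -Real.log r := by
    have h1y : 0 < 1 - y := by linarith [abs_lt.1 hy1]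
    rw [← Real.log_div (by positivity) h1y.ne', ← Real.log_inv]
    congr 1
    rw [hy]
    field_simp [h0.ne']
    ring
  have hsum := hlog ▸ Real.hasSum_log_sub_log_of_abs_lt_one hy1
  have hle := sum_le_hasSum (Finset.range 2) (fun k _ => by positivity) hsum
  norm_num [Finset.sum_range_succ] at hle
  have : 0 < y ^ 3 := by positivity
  rw [mul_div_assoc]
  linarith

lemma radialFactor_pos {r : ℝ} (h0 : 0 < r) (h1 : r < 1) : 0 < radialFactor r :=
  div_pos_of_neg_of_neg (by nlinarith) (Real.log_neg h0 h1)

lemma radialFactor_lt {r : ℝ} (h0 : 0 < r) (h1 : r < 1) :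
    radialFactor r < (1 + r) ^ 2 / 2 := by
  have hlog := two_mul_one_sub_div_one_add_lt_neg_log h0 h1
  rw [radialFactor, div_lt_iff_of_neg (Real.log_neg h0 h1)]
  rw [div_lt_iff₀ (by linarith)] at hlog
  nlinarith

lemma continuousAt_radialFactor {R : ℝ} (hR : Real.log R ≠ 0) : ContinuousAt radialFactor R :=
  (continuousAt_id.pow 2).sub continuousAt_const |>.div
    (Real.continuousAt_log fun h => hR (h ▸ Real.log_zero)) hR

lemma tendsto_radialFactor_nhdsGT_zero : Tendsto radialFactor (𝓝[>] 0) (𝓝 0) := by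
  have hnum : Tendsto (fun r : ℝ => r ^ 2 - 1) (𝓝[>] 0) (𝓝 (0 ^ 2 - 1)) :=
    ((continuous_pow 2).sub continuous_const).continuousAt.tendsto.mono_left nhdsWithin_le_nhds
  exact hnum.div_atBot Real.tendsto_log_nhdsGT_zero

lemma tendsto_radialFactor_nhdsNE_one : Tendsto radialFactor (𝓝[≠] 1) (𝓝 2) := by
  have hslope := (Real.hasDerivAt_log one_ne_zero).tendsto_slope.inv₀ (by norm_num)
  have hadd : Tendsto (fun r : ℝ => r + 1) (𝓝[≠] 1) (𝓝 2) := by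
    refine tendsto_nhdsWithin_of_tendsto_nhds ?_
    convert (continuous_add_const (1 : ℝ)).tendsto 1 using 2
    norm_num
  refine Tendsto.congr (fun r => ?_) (by simpa using hadd.mul hslope)
  rw [slope_def_field, Real.log_one, sub_zero, inv_div, radialFactor, mul_div_assoc', ← sq_sub_sq,
    one_pow]

section PoissonKernel

variable {ζ w : ℂ} {r : ℝ}

lemma one_sub_abs_le_norm_sub_ofReal_mul (hζ : ‖ζ‖ = 1) (hw : ‖w‖ = 1) (r : ℝ) :
    1 - |r| ≤ ‖ζ - r * w‖ := by
  simpa [hζ, hw] using norm_sub_norm_le ζ (r * w)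

lemma one_div_norm_sub_ofReal_mul_sq_le (hζ : ‖ζ‖ = 1) (hw : ‖w‖ = 1) {s : ℝ} (hr : |r| ≤ s)
    (hs : s < 1) : 1 / ‖ζ - r * w‖ ^ 2 ≤ 1 / (1 - s) ^ 2 :=
  one_div_le_one_div_of_le (by nlinarith) <|
    pow_le_pow_left₀ (by linarith) ((sub_le_sub_left hr 1).trans
      (one_sub_abs_le_norm_sub_ofReal_mul hζ hw r)) 2

lemma norm_sub_ofReal_mul_sq (hζ : ‖ζ‖ = 1) (hw : ‖w‖ = 1) (r : ℝ) :
    ‖ζ - r * w‖ ^ 2 = 1 - 2 * r * (ζ * (starRingEnd ℂ) w).re + r ^ 2 := by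
  rw [Complex.sq_norm, Complex.normSq_sub, Complex.normSq_mul, Complex.normSq_ofReal,
    Complex.normSq_eq_norm_sq, Complex.normSq_eq_norm_sq, hζ, hw, map_mul, Complex.conj_ofReal,
    mul_left_comm, Complex.re_ofReal_mul]
  ring

lemma radialFactor_div_lt (hζ : ‖ζ‖ = 1) (hw : ‖w‖ = 1) (h0 : 0 < r) (h1 : r < 1)
    (hζw : ζ ≠ w) : radialFactor r / ‖ζ - r * w‖ ^ 2 < 2 / ‖ζ - w‖ ^ 2 := by
  set x := (ζ * (starRingEnd ℂ) w).re
  have hx : |x| ≤ 1 := by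
    have := Complex.abs_re_le_norm (ζ * (starRingEnd ℂ) w)
    rwa [norm_mul, Complex.norm_conj, hζ, hw, mul_one] at this
  have hd : ‖ζ - r * w‖ ^ 2 = 1 - 2 * r * x + r ^ 2 := norm_sub_ofReal_mul_sq hζ hw r
  have hd1 : ‖ζ - w‖ ^ 2 = 2 - 2 * x := by
    have h := norm_sub_ofReal_mul_sq hζ hw 1
    rw [Complex.ofReal_one, one_mul] at h
    rw [h]
    ring
  have hd1pos : 0 < ‖ζ - w‖ ^ 2 := by positivity [sub_ne_zero.2 hζw]
  have hdpos : 0 < ‖ζ - r * w‖ ^ 2 := by nlinarith [abs_le.1 hx]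
  rw [div_lt_div_iff₀ hdpos hd1pos, hd, hd1]
  rw [hd1] at hd1pos
  -- `2 (1 - 2 r x + r²) - (1 + r)² (1 - x) = (1 - r)² (1 + x) ≥ 0`
  nlinarith [mul_lt_mul_of_pos_right (radialFactor_lt h0 h1) hd1pos,
    mul_nonneg (sq_nonneg (1 - r)) (by linarith [abs_le.1 hx] : (0:ℝ) ≤ 1 + x)]

lemma ofReal_radialFactor_mul_eq (hζ : ‖ζ‖ = 1) (hw : ‖w‖ = 1) (h0 : 0 < r) (h1 : r < 1) :
    ENNReal.ofReal (radialFactor r * (1 / ‖ζ - r * w‖ ^ 2))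
      = ENNReal.ofReal (radialFactor r) * (ENNReal.ofReal (‖ζ - r * w‖ ^ 2))⁻¹ := by
  have hpos : 0 < ‖ζ - r * w‖ ^ 2 := pow_pos ((sub_pos.2 (abs_lt.2 ⟨by linarith, h1⟩)).trans_le
    (one_sub_abs_le_norm_sub_ofReal_mul hζ hw r)) 2
  rw [ENNReal.ofReal_mul (radialFactor_pos h0 h1).le, one_div, ENNReal.ofReal_inv_of_pos hpos]

lemma ofReal_radialFactor_mul_lt (hζ : ‖ζ‖ = 1) (hw : ‖w‖ = 1) (h0 : 0 < r) (h1 : r < 1) :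
    ENNReal.ofReal (radialFactor r * (1 / ‖ζ - r * w‖ ^ 2))
      < 2 * (ENNReal.ofReal (‖ζ - w‖ ^ 2))⁻¹ := by
  rcases eq_or_ne ζ w with rfl | hζw
  · simp -- the right side is `2 * 0⁻¹ = ⊤`
  have hpos : 0 < ‖ζ - w‖ ^ 2 := by positivity [sub_ne_zero.2 hζw]
  rw [← ENNReal.ofReal_inv_of_pos hpos, ← ENNReal.ofReal_ofNat 2,
    ← ENNReal.ofReal_mul zero_le_two, ENNReal.ofReal_lt_ofReal_iff (by positivity), ← div_eq_mul_inv,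
    mul_one_div]
  exact radialFactor_div_lt hζ hw h0 h1 hζw

lemma tendsto_ofReal_radialFactor_mul (hζ : ‖ζ‖ = 1) (hw : ‖w‖ = 1) :
    Tendsto (fun r : ℝ => ENNReal.ofReal (radialFactor r * (1 / ‖ζ - r * w‖ ^ 2))) (𝓝[<] 1)
      (𝓝 (2 * (ENNReal.ofReal (‖ζ - w‖ ^ 2))⁻¹)) := by
  have hfactor : Tendsto (fun r => ENNReal.ofReal (radialFactor r)) (𝓝[<] 1) (𝓝 2) := by
    simpa using ENNReal.tendsto_ofReal
      (tendsto_radialFactor_nhdsNE_one.mono_left (nhdsLT_le_nhdsNE 1))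
  have hdist : Tendsto (fun r : ℝ => (ENNReal.ofReal (‖ζ - r * w‖ ^ 2))⁻¹) (𝓝[<] 1)
      (𝓝 (ENNReal.ofReal (‖ζ - w‖ ^ 2))⁻¹) := by
    refine (ENNReal.tendsto_ofReal ?_).inv
    refine tendsto_nhdsWithin_of_tendsto_nhds ?_
    simpa using ((by fun_prop : Continuous fun r : ℝ => ‖ζ - r * w‖ ^ 2).tendsto 1)
  refine (ENNReal.Tendsto.mul hfactor (.inl two_ne_zero) hdist (.inr ofNat_ne_top)).congr' ?_
  filter_upwards [Ioo_mem_nhdsLT one_pos] with r hr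
  exact (ofReal_radialFactor_mul_eq hζ hw hr.1 hr.2).symm

end PoissonKernel

section CircleMeasure

variable {ρ : Measure ℂ} {w : ℂ} {r θ : ℝ}

lemma integrable_one_div_norm_sub_ofReal_mul_sq [IsFiniteMeasure ρ] (hρ : ∀ᵐ ζ ∂ρ, ‖ζ‖ = 1)
    (hw : ‖w‖ = 1) (hr : |r| < 1) :
    Integrable (fun ζ : ℂ => 1 / ‖ζ - r * w‖ ^ 2) ρ := by
  refine Integrable.mono' (integrable_const (1 / (1 - |r|) ^ 2))
    (Measurable.aestronglyMeasurable (by fun_prop)) ?_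
  filter_upwards [hρ] with ζ hζ
  rw [Real.norm_of_nonneg (by positivity)]
  exact one_div_norm_sub_ofReal_mul_sq_le hζ hw le_rfl hr

lemma ofReal_GT_eq_lintegral [IsFiniteMeasure ρ] (hρ : ∀ᵐ ζ ∂ρ, ‖ζ‖ = 1) (h0 : 0 < r)
    (h1 : r < 1) :
    ENNReal.ofReal (GT ρ r θ) = ∫⁻ ζ, ENNReal.ofReal (radialFactor r *
      (1 / ‖ζ - r * Complex.exp (θ * Complex.I)‖ ^ 2)) ∂ρ := by
  rw [GT, ← integral_const_mul]
  refine ofReal_integral_eq_lintegral_ofReal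
    ((integrable_one_div_norm_sub_ofReal_mul_sq hρ (Complex.norm_exp_ofReal_mul_I θ)
      (abs_lt.2 ⟨by linarith, h1⟩)).const_mul _)
    (ae_of_all _ fun ζ => ?_)
  have := radialFactor_pos h0 h1
  positivity

lemma GT_lt_of_gT_le [IsFiniteMeasure ρ] (hρ : ∀ᵐ ζ ∂ρ, ‖ζ‖ = 1) {c : ℝ} (hc : 0 < c)
    (hg : gT ρ θ ≤ ENNReal.ofReal c) (h0 : 0 < r) (h1 : r < 1) : GT ρ r θ < c := by
  rcases eq_or_ne ρ 0 with rfl | hρ0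
  · simpa [GT] using hc
  refine (ENNReal.ofReal_lt_ofReal_iff hc).1 (lt_of_lt_of_le ?_ hg)
  rw [ofReal_GT_eq_lintegral hρ h0 h1, gT, ← lintegral_const_mul _ (by fun_prop)]
  refine lintegral_strict_mono hρ0 (by fun_prop) ?_ ?_
  · rw [← ofReal_GT_eq_lintegral hρ h0 h1]
    exact ENNReal.ofReal_ne_top
  · filter_upwards [hρ] with ζ hζ
    exact ofReal_radialFactor_mul_lt hζ (Complex.norm_exp_ofReal_mul_I θ) h0 h1

lemma gT_le_liminf_GT [IsFiniteMeasure ρ] (hρ : ∀ᵐ ζ ∂ρ, ‖ζ‖ = 1) :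
    gT ρ θ ≤ liminf (fun r => ENNReal.ofReal (GT ρ r θ)) (𝓝[<] 1) := by
  have hw := Complex.norm_exp_ofReal_mul_I θ
  calc gT ρ θ
      = ∫⁻ ζ, 2 * (ENNReal.ofReal (‖ζ - Complex.exp (θ * Complex.I)‖ ^ 2))⁻¹ ∂ρ := by
        rw [gT, lintegral_const_mul _ (by fun_prop)]
    _ = ∫⁻ ζ, liminf (fun r : ℝ => ENNReal.ofReal (radialFactor r *
          (1 / ‖ζ - r * Complex.exp (θ * Complex.I)‖ ^ 2))) (𝓝[<] 1) ∂ρ := by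
        refine lintegral_congr_ae ?_
        filter_upwards [hρ] with ζ hζ
        exact (tendsto_ofReal_radialFactor_mul hζ hw).liminf_eq.symm
    _ ≤ liminf (fun r : ℝ => ∫⁻ ζ, ENNReal.ofReal (radialFactor r *
          (1 / ‖ζ - r * Complex.exp (θ * Complex.I)‖ ^ 2)) ∂ρ) (𝓝[<] 1) :=
        lintegral_liminf_le fun r => by fun_prop
    _ = liminf (fun r => ENNReal.ofReal (GT ρ r θ)) (𝓝[<] 1) := by
        refine liminf_congr ?_
        filter_upwards [Ioo_mem_nhdsLT one_pos] with r hr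
        exact (ofReal_GT_eq_lintegral hρ hr.1 hr.2).symm

lemma continuousAt_integral_one_div_norm_sub_ofReal_mul_sq [IsFiniteMeasure ρ]
    (hρ : ∀ᵐ ζ ∂ρ, ‖ζ‖ = 1) (hw : ‖w‖ = 1) {R : ℝ} (hR : |R| < 1) :
    ContinuousAt (fun r : ℝ => ∫ ζ, 1 / ‖ζ - r * w‖ ^ 2 ∂ρ) R := by
  obtain ⟨s, hRs, hs⟩ := exists_between hR
  refine continuousAt_of_dominated (bound := fun _ => 1 / (1 - s) ^ 2)
    (.of_forall fun r => Measurable.aestronglyMeasurable (by fun_prop)) ?_ (integrable_const _) ?_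
  · filter_upwards [Ioo_mem_nhds (neg_lt_of_abs_lt hRs) (lt_of_abs_lt hRs)] with r hr
    filter_upwards [hρ] with ζ hζ
    rw [Real.norm_of_nonneg (by positivity)]
    exact one_div_norm_sub_ofReal_mul_sq_le hζ hw (abs_le.2 ⟨hr.1.le, hr.2.le⟩) hs
  · filter_upwards [hρ] with ζ hζ
    have : 0 < ‖ζ - R * w‖ :=
      (sub_pos.2 hR).trans_le (one_sub_abs_le_norm_sub_ofReal_mul hζ hw R)
    exact continuousAt_const.div (by fun_prop) (by positivity)

lemma continuousAt_GT [IsFiniteMeasure ρ] (hρ : ∀ᵐ ζ ∂ρ, ‖ζ‖ = 1) {R : ℝ} (h0 : 0 < R)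
    (h1 : R < 1) : ContinuousAt (fun r => GT ρ r θ) R :=
  (continuousAt_radialFactor (Real.log_neg h0 h1).ne).mul
    (continuousAt_integral_one_div_norm_sub_ofReal_mul_sq hρ (Complex.norm_exp_ofReal_mul_I θ)
      (abs_lt.2 ⟨by linarith, h1⟩))

lemma tendsto_GT_nhdsGT_zero [IsFiniteMeasure ρ] (hρ : ∀ᵐ ζ ∂ρ, ‖ζ‖ = 1) :
    Tendsto (fun r => GT ρ r θ) (𝓝[>] 0) (𝓝 0) := by
  have h := tendsto_radialFactor_nhdsGT_zero.mul
    ((continuousAt_integral_one_div_norm_sub_ofReal_mul_sq hρ (Complex.norm_exp_ofReal_mul_I θ)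
      (by simp)).tendsto.mono_left nhdsWithin_le_nhds)
  rw [zero_mul] at h
  exact h

end CircleMeasure

section SublevelSup

variable {f : ℝ → ℝ} {a b c : ℝ}

lemma sSup_sublevel_lt_of_eventually_le (hne : {r | r ∈ Ioo a b ∧ f r < c}.Nonempty)
    (h : ∀ᶠ r in 𝓝[<] b, c ≤ f r) : sSup {r | r ∈ Ioo a b ∧ f r < c} < b := by
  obtain ⟨l, hlb, hl⟩ := (mem_nhdsLT_iff_exists_Ioo_subset' hne.some_mem.1.2).1 h
  refine (csSup_le hne fun r hr => ?_).trans_lt hlb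
  by_contra! hlr
  exact (hl ⟨hlr, hr.1.2⟩ : c ≤ f r).not_gt hr.2

lemma apply_sSup_sublevel_eq (hne : {r | r ∈ Ioo a b ∧ f r < c}.Nonempty)
    (hlt : sSup {r | r ∈ Ioo a b ∧ f r < c} < b)
    (hf : ContinuousAt f (sSup {r | r ∈ Ioo a b ∧ f r < c})) :
    f (sSup {r | r ∈ Ioo a b ∧ f r < c}) = c := by
  set S := {r | r ∈ Ioo a b ∧ f r < c}
  have hbdd : BddAbove S := ⟨b, fun r hr => hr.1.2.le⟩
  have haS : a < sSup S := hne.some_mem.1.1.trans_le (le_csSup hbdd hne.some_mem)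
  refine le_antisymm ?_ ?_
  · exact ContinuousWithinAt.closure_le (csSup_mem_closure hne hbdd) hf.continuousWithinAt
      continuousWithinAt_const fun r hr => hr.2.le
  · refine ContinuousWithinAt.closure_le (s := Ioo (sSup S) b) ?_ continuousWithinAt_const
      hf.continuousWithinAt fun r hr => ?_
    · rw [closure_Ioo hlt.ne]
      exact left_mem_Icc.2 hlt.le
    · by_contra! hfr
      exact (le_csSup hbdd ⟨⟨haS.trans hr.1, hr.2⟩, hfr⟩).not_gt hr.1

end SublevelSup

theorem stmt16_general (ρ : Measure ℂ) [IsFiniteMeasure ρ]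
    (hρ : ρ {z : ℂ | ‖z‖ = 1}ᶜ = 0)
    (t : ℝ) (ht : 1 < t) (θ : ℝ) :
    ({r : ℝ | r ∈ Set.Ioo (0 : ℝ) 1 ∧ GT ρ r θ < 1 / (t - 1)}).Nonempty ∧
    (0 < RT ρ t θ ∧ RT ρ t θ ≤ 1) ∧
    (RT ρ t θ < 1 ↔ ENNReal.ofReal (1 / (t - 1)) < gT ρ θ) ∧
    (RT ρ t θ < 1 → GT ρ (RT ρ t θ) θ = 1 / (t - 1)) := by
  have hc : 0 < 1 / (t - 1) := one_div_pos.2 (sub_pos.2 ht)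
  set S := {r : ℝ | r ∈ Set.Ioo (0 : ℝ) 1 ∧ GT ρ r θ < 1 / (t - 1)}
  have hne : S.Nonempty := by
    obtain ⟨r, hGr, hr⟩ := ((tendsto_GT_nhdsGT_zero hρ).eventually (gt_mem_nhds hc)).and
      (Ioo_mem_nhdsGT one_pos) |>.exists
    exact ⟨r, hr, hGr⟩
  have hbdd : BddAbove S := ⟨1, fun r hr => hr.1.2.le⟩
  have hRpos : 0 < RT ρ t θ := hne.some_mem.1.1.trans_le (le_csSup hbdd hne.some_mem)
  refine ⟨hne, ⟨hRpos, csSup_le hne fun r hr => hr.1.2.le⟩, ⟨fun hR => ?_, fun hg => ?_⟩,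
    fun hR => apply_sSup_sublevel_eq hne hR (continuousAt_GT hρ hRpos hR)⟩
  · by_contra! hg
    have hS : S = Ioo 0 1 := Set.ext fun r =>
      ⟨And.left, fun hr => ⟨hr, GT_lt_of_gT_le hρ hc hg hr.1 hr.2⟩⟩
    exact hR.ne (show sSup S = 1 by rw [hS, csSup_Ioo one_pos])
  · refine sSup_sublevel_lt_of_eventually_le hne ?_
    filter_upwards [eventually_lt_of_lt_liminf (hg.trans_le (gT_le_liminf_GT hρ))] with r hr
    exact ((ENNReal.ofReal_lt_ofReal_iff_of_nonneg hc.le).1 hr).le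

theorem stmt16 (ρ : Measure ℂ) [IsFiniteMeasure ρ]
    (hρ : ρ {z : ℂ | ‖z‖ = 1}ᶜ = 0)
    (t : ℝ) (ht : 1 < t) (θ : ℝ) (hθ : θ ∈ Set.Icc (-Real.pi) Real.pi) :
    ({r : ℝ | r ∈ Set.Ioo (0 : ℝ) 1 ∧ GT ρ r θ < 1 / (t - 1)}).Nonempty ∧
    (0 < RT ρ t θ ∧ RT ρ t θ ≤ 1) ∧
    (RT ρ t θ < 1 ↔ ENNReal.ofReal (1 / (t - 1)) < gT ρ θ) ∧
    (RT ρ t θ < 1 → GT ρ (RT ρ t θ) θ = 1 / (t - 1)) :=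
  stmt16_general ρ hρ t ht θ
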